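/- arXiv:0807.1811 — 2 statements merged into one kernel-verified Lean document; each statement's English description precedes it below -/
import Mathlib

section
/- Let C be a chain complex of A-modules with C_n = 0 for n < n_0, D a chain complex of A-modules with a k-linear chain contraction s (so ds + sd = 1 on D), f : C → D an A-linear chain map, and suppose each C_n is of the form A ⊗_k V_n for k-modules V_n. Then the maps κ_n : C_n → D_{n+1} defined A-linearly by κ_{n_0}(a⊗v) = a·s(f(v)) and κ_n(a⊗v) = a·s((f - κ_{n-1}∘d)(v)) for n > n_0 form an A-linear chain contraction of f, i.e. f = κ∘d + d∘κ. -/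
/-!
On a generator `1 ⊗ v` of `C_{n+1}` the recursion sets `κ (1 ⊗ v) = s y` with
`y = f (1 ⊗ v) - κ (d (1 ⊗ v))`. By induction on `n`, the chain contraction identity one degree
lower shows that `y` is a cycle (at the bottom, `d (1 ⊗ v) = 0` because `C` vanishes below `n₀`),
and `d s y = y` for every cycle `y`, which is the identity on generators. Both sides of the
identity are `A`-linear, and the generators `1 ⊗ v` span `A ⊗ₖ V` over `A`.
-/

open TensorProduct

section TensorGenerators

variable {k A : Type*} [CommRing k] [Ring A] [Algebra k A]
  {V : Type*} [AddCommGroup V] [Module k V] {W : Type*} [AddCommGroup W] [Module A W]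

theorem TensorProduct.ext_one_tmul {L₁ L₂ : A ⊗[k] V →ₗ[A] W}
    (h : ∀ v : V, L₁ ((1 : A) ⊗ₜ v) = L₂ ((1 : A) ⊗ₜ v)) : L₁ = L₂ := by
  refine LinearMap.ext fun t => ?_
  induction t using TensorProduct.induction_on with
  | zero => simp only [map_zero]
  | tmul a v => rw [← mul_one a, ← smul_eq_mul, ← smul_tmul', map_smul, map_smul, h]
  | add x y hx hy => rw [map_add, map_add, hx, hy]

theorem LinearEquiv.ext_one_tmul {M : Type*} [AddCommGroup M] [Module A M]
    (e : M ≃ₗ[A] A ⊗[k] V) {L₁ L₂ : M →ₗ[A] W}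
    (h : ∀ v : V, L₁ (e.symm ((1 : A) ⊗ₜ v)) = L₂ (e.symm ((1 : A) ⊗ₜ v))) : L₁ = L₂ :=
  (e.symm.eq_comp_toLinearMap_iff L₁ L₂).mp (TensorProduct.ext_one_tmul h)

end TensorGenerators

section Contraction

variable {k A : Type*} [CommRing k] [Ring A] {C D : ℤ → Type*}
  [∀ n, AddCommGroup (C n)] [∀ n, Module A (C n)]
  [∀ n, AddCommGroup (D n)] [∀ n, Module k (D n)] [∀ n, Module A (D n)]
  {dC : ∀ n : ℤ, C (n + 1) →ₗ[A] C n} {dD : ∀ n : ℤ, D (n + 1) →ₗ[A] D n}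
  {f : ∀ n, C n →ₗ[A] D n} {s : ∀ n : ℤ, D n →ₗ[k] D (n + 1)} {κ : ∀ n : ℤ, C n →ₗ[A] D (n + 1)}

theorem dD_s_of_dD_eq_zero
    (hs : ∀ (n : ℤ) (x : D (n + 1)), s n (dD n x) + dD (n + 1) (s (n + 1) x) = x)
    {n : ℤ} {y : D (n + 1)} (hy : dD n y = 0) : dD (n + 1) (s (n + 1) y) = y := by
  simpa only [hy, map_zero, zero_add] using hs n y

theorem dD_f_sub_κ_dC_of_subsingleton (hf : ∀ n, dD n ∘ₗ f (n + 1) = f n ∘ₗ dC n)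
    {n : ℤ} [Subsingleton (C n)] (x : C (n + 1)) :
    dD n (f (n + 1) x - κ n (dC n x)) = 0 := by
  rw [Subsingleton.elim (dC n x) 0, map_zero, sub_zero, ← LinearMap.comp_apply, hf,
    LinearMap.comp_apply, Subsingleton.elim (dC n x) 0, map_zero]

theorem dD_f_sub_κ_dC_of_homotopy (hC2 : ∀ n, dC n ∘ₗ dC (n + 1) = 0)
    (hf : ∀ n, dD n ∘ₗ f (n + 1) = f n ∘ₗ dC n) {n : ℤ}
    (ih : ∀ x : C (n + 1), f (n + 1) x = κ n (dC n x) + dD (n + 1) (κ (n + 1) x))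
    (x : C (n + 1 + 1)) :
    dD (n + 1) (f (n + 1 + 1) x - κ (n + 1) (dC (n + 1) x)) = 0 := by
  rw [map_sub, ← LinearMap.comp_apply (dD _), hf, LinearMap.comp_apply, ih,
    ← LinearMap.comp_apply (dC n), hC2, LinearMap.zero_apply, map_zero, zero_add, sub_self]

theorem homotopy_of_one_tmul [Algebra k A] {V : Type*} [AddCommGroup V] [Module k V] {n : ℤ}
    (e : C (n + 1) ≃ₗ[A] A ⊗[k] V)
    (hs : ∀ (n : ℤ) (x : D (n + 1)), s n (dD n x) + dD (n + 1) (s (n + 1) x) = x)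
    (hcycle : ∀ x : C (n + 1), dD n (f (n + 1) x - κ n (dC n x)) = 0)
    (hκ : ∀ v : V, κ (n + 1) (e.symm ((1 : A) ⊗ₜ v)) =
      s (n + 1) (f (n + 1) (e.symm ((1 : A) ⊗ₜ v)) - κ n (dC n (e.symm ((1 : A) ⊗ₜ v)))))
    (x : C (n + 1)) : f (n + 1) x = κ n (dC n x) + dD (n + 1) (κ (n + 1) x) := by
  suffices f (n + 1) = κ n ∘ₗ dC n + dD (n + 1) ∘ₗ κ (n + 1) from LinearMap.congr_fun this x
  refine e.ext_one_tmul fun v => ?_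
  rw [LinearMap.add_apply, LinearMap.comp_apply, LinearMap.comp_apply, hκ,
    dD_s_of_dD_eq_zero hs (hcycle _), add_sub_cancel]

end Contraction

theorem chain_contraction_of_recursion_general
    (k A : Type) [CommRing k] [Ring A] [Algebra k A]
    (C D : ℤ → Type)
    [∀ n, AddCommGroup (C n)] [∀ n, Module A (C n)]
    [∀ n, AddCommGroup (D n)] [∀ n, Module k (D n)] [∀ n, Module A (D n)]
    (dC : ∀ n : ℤ, C (n + 1) →ₗ[A] C n) (dD : ∀ n : ℤ, D (n + 1) →ₗ[A] D n)
    (hC2 : ∀ n, dC n ∘ₗ dC (n + 1) = 0)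
    (n₀ : ℤ) (hbot : ∀ n : ℤ, n < n₀ → Subsingleton (C n))
    (V : ℤ → Type) [∀ n, AddCommGroup (V n)] [∀ n, Module k (V n)]
    (e : ∀ n, C n ≃ₗ[A] A ⊗[k] V n)
    (f : ∀ n, C n →ₗ[A] D n)
    (hf : ∀ n, dD n ∘ₗ f (n + 1) = f n ∘ₗ dC n)
    (s : ∀ n : ℤ, D n →ₗ[k] D (n + 1))
    (hs : ∀ (n : ℤ) (x : D (n + 1)), s n (dD n x) + dD (n + 1) (s (n + 1) x) = x)
    (κ : ∀ n : ℤ, C n →ₗ[A] D (n + 1))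
    (hbase : ∀ v : V n₀,
      κ n₀ ((e n₀).symm ((1 : A) ⊗ₜ[k] v)) = s n₀ (f n₀ ((e n₀).symm ((1 : A) ⊗ₜ[k] v))))
    (hstep : ∀ n : ℤ, n₀ ≤ n → ∀ v : V (n + 1),
      κ (n + 1) ((e (n + 1)).symm ((1 : A) ⊗ₜ[k] v)) =
        s (n + 1) (f (n + 1) ((e (n + 1)).symm ((1 : A) ⊗ₜ[k] v)) -
          κ n (dC n ((e (n + 1)).symm ((1 : A) ⊗ₜ[k] v))))) :
    ∀ (n : ℤ) (x : C (n + 1)),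
      f (n + 1) x = κ n (dC n x) + dD (n + 1) (κ (n + 1) x) := by
  obtain ⟨m₀, rfl⟩ : ∃ m₀, n₀ = m₀ + 1 := ⟨n₀ - 1, by ring⟩
  have hbelow : Subsingleton (C m₀) := hbot m₀ (lt_add_one m₀)
  have hhomotopy : ∀ n, m₀ ≤ n → ∀ x : C (n + 1),
      f (n + 1) x = κ n (dC n x) + dD (n + 1) (κ (n + 1) x) := by
    refine Int.leInduction ?_ fun n hn ih => ?_
    · refine homotopy_of_one_tmul (e _) hs (dD_f_sub_κ_dC_of_subsingleton hf) fun v => ?_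
      rw [hbase, Subsingleton.elim (dC m₀ _) 0, map_zero, sub_zero]
    · exact homotopy_of_one_tmul (e _) hs (dD_f_sub_κ_dC_of_homotopy hC2 hf ih)
        (hstep (n + 1) (by omega))
  intro n x
  rcases le_or_gt m₀ n with hn | hn
  · exact hhomotopy n hn x
  · have : Subsingleton (C (n + 1)) := hbot (n + 1) (by omega)
    simp only [Subsingleton.elim x 0, map_zero, add_zero]

/-- Let `C` be a chain complex of `A`-modules vanishing below degree
`n₀`, `D` a chain complex of `A`-modules with a `k`-linear chain contraction `s`
(`d s + s d = 1`), `f : C → D` an `A`-linear chain map, and suppose each `Cₙ` is of the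
form `A ⊗ₖ Vₙ`.  Then any family `κₙ : Cₙ → D_{n+1}` of `A`-linear maps satisfying the
defining equations `κ_{n₀}(1 ⊗ v) = s (f (1 ⊗ v))` and, for `n > n₀`,
`κₙ(1 ⊗ v) = s ((f - κ_{n-1} ∘ d)(1 ⊗ v))` is an `A`-linear chain contraction of `f`:
`f = κ ∘ d + d ∘ κ`. -/
theorem chain_contraction_of_recursion
    (k A : Type) [CommRing k] [Ring A] [Algebra k A]
    (C D : ℤ → Type)
    [∀ n, AddCommGroup (C n)] [∀ n, Module A (C n)]
    [∀ n, AddCommGroup (D n)] [∀ n, Module k (D n)] [∀ n, Module A (D n)]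
    [∀ n, IsScalarTower k A (D n)]
    (dC : ∀ n : ℤ, C (n + 1) →ₗ[A] C n) (dD : ∀ n : ℤ, D (n + 1) →ₗ[A] D n)
    (hC2 : ∀ n, dC n ∘ₗ dC (n + 1) = 0) (hD2 : ∀ n, dD n ∘ₗ dD (n + 1) = 0)
    (n₀ : ℤ) (hbot : ∀ n : ℤ, n < n₀ → Subsingleton (C n))
    (V : ℤ → Type) [∀ n, AddCommGroup (V n)] [∀ n, Module k (V n)]
    (e : ∀ n, C n ≃ₗ[A] A ⊗[k] V n)
    (f : ∀ n, C n →ₗ[A] D n)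
    (hf : ∀ n, dD n ∘ₗ f (n + 1) = f n ∘ₗ dC n)
    (s : ∀ n : ℤ, D n →ₗ[k] D (n + 1))
    (hs : ∀ (n : ℤ) (x : D (n + 1)), s n (dD n x) + dD (n + 1) (s (n + 1) x) = x)
    (κ : ∀ n : ℤ, C n →ₗ[A] D (n + 1))
    (hbase : ∀ v : V n₀,
      κ n₀ ((e n₀).symm ((1 : A) ⊗ₜ[k] v)) = s n₀ (f n₀ ((e n₀).symm ((1 : A) ⊗ₜ[k] v))))
    (hstep : ∀ n : ℤ, n₀ ≤ n → ∀ v : V (n + 1),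
      κ (n + 1) ((e (n + 1)).symm ((1 : A) ⊗ₜ[k] v)) =
        s (n + 1) (f (n + 1) ((e (n + 1)).symm ((1 : A) ⊗ₜ[k] v)) -
          κ n (dC n ((e (n + 1)).symm ((1 : A) ⊗ₜ[k] v))))) :
    ∀ (n : ℤ) (x : C (n + 1)),
      f (n + 1) x = κ n (dC n x) + dD (n + 1) (κ (n + 1) x) :=
  chain_contraction_of_recursion_general k A C D dC dD hC2 n₀ hbot V e f hf s hs κ hbase hstep
end

section
/- Let H be a cocommutative Hopf algebra over k and α, β the maps of the previous statement. Then α and β intertwine the diagonal left H-module structure on R_n(H) = H^{⊗(n+1)} (a·(h_0⊗…⊗h_n) = a^{(0)}h_0⊗…⊗a^{(n)}h_n) with the left H-module structure on E_n(H) = H^{⊗(n+1)} given by multiplication on the first factor; i.e., α(a·_E x) = a·_R α(x) for all a ∈ H and x ∈ H^{⊗(n+1)}. -/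
open TensorProduct LinearMap

noncomputable section

variable (k H : Type) [CommRing k] [Ring H] [HopfAlgebra k H]

/-- `VM k H n` is the `n`-fold tensor power `H ⊗ ⋯ ⊗ H` (with `VM k H 0 = k`),
as an object of the category of `k`-modules. -/
def VM : ℕ → ModuleCat k
  | 0 => ModuleCat.of k k
  | n + 1 => ModuleCat.of k (H ⊗[k] (VM n))

/-- the `n`-fold tensor power `H^{⊗n}` -/
abbrev Vpow (n : ℕ) : Type := ↥(VM k H n)

/-- cast along an equality of lengths -/
def castV {m n : ℕ} (h : m = n) : Vpow k H m →ₗ[k] Vpow k H n := h ▸ LinearMap.id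

/-- iterated composition (`f ^ i`) -/
def powL {M : Type} [AddCommGroup M] [Module k M] (f : M →ₗ[k] M) : ℕ → (M →ₗ[k] M)
  | 0 => LinearMap.id
  | i + 1 => f ∘ₗ powL f i

abbrev mu : H ⊗[k] H →ₗ[k] H := LinearMap.mul' k H
abbrev cm : H →ₗ[k] H ⊗[k] H := Coalgebra.comul
abbrev ct : H →ₗ[k] k := Coalgebra.counit
abbrev ap : H →ₗ[k] H := HopfAlgebra.antipode (R := k)
abbrev un : k →ₗ[k] H := Algebra.linearMap k H

/-- the diagonal action of `H` on `H^{⊗ n}` (via iterated comultiplication) -/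
def diagAct : ∀ n, H ⊗[k] Vpow k H n →ₗ[k] Vpow k H n
  | 0 => ct k H ∘ₗ (TensorProduct.rid k H).toLinearMap
  | n + 1 =>
    TensorProduct.map (mu k H) (diagAct n) ∘ₗ
      (tensorTensorTensorComm k H H H (Vpow k H n)).toLinearMap ∘ₗ
      rTensor (H ⊗[k] Vpow k H n) (cm k H)

/-- multiplication on the first tensor factor (with the counit action in degree `0`) -/
def actF : ∀ n, H ⊗[k] Vpow k H n →ₗ[k] Vpow k H n
  | 0 => ct k H ∘ₗ (TensorProduct.rid k H).toLinearMap
  | n + 1 =>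
    TensorProduct.map (mu k H) LinearMap.id ∘ₗ
      (TensorProduct.assoc k H H (Vpow k H n)).symm.toLinearMap

/-- the map `α(h₀ ⊗ ⋯ ⊗ hₙ) = h₀⁽⁰⁾ ⊗ h₀⁽¹⁾h₁⁽⁰⁾ ⊗ ⋯` -/
def alphaMap : ∀ n, Vpow k H n →ₗ[k] Vpow k H n
  | 0 => LinearMap.id
  | n + 1 =>
    lTensor H (diagAct k H n) ∘ₗ (TensorProduct.assoc k H H (Vpow k H n)).toLinearMap ∘ₗ
      TensorProduct.map (cm k H) (alphaMap n)

/-- the map `β(h₀ ⊗ ⋯ ⊗ hₙ) = h₀⁽⁰⁾ ⊗ (S h₀⁽¹⁾)h₁⁽⁰⁾ ⊗ ⋯` -/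
def betaMap : ∀ n, Vpow k H n →ₗ[k] Vpow k H n
  | 0 => LinearMap.id
  | n + 1 =>
    lTensor H (betaMap n ∘ₗ actF k H n ∘ₗ rTensor (Vpow k H n) (ap k H)) ∘ₗ
      (TensorProduct.assoc k H H (Vpow k H n)).toLinearMap ∘ₗ
      rTensor (Vpow k H n) (cm k H)

/-- swap of the first two tensor factors -/
def swapV (n : ℕ) : H ⊗[k] (H ⊗[k] Vpow k H n) →ₗ[k] H ⊗[k] (H ⊗[k] Vpow k H n) :=
  (TensorProduct.assoc k H H (Vpow k H n)).toLinearMap ∘ₗ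
    rTensor (Vpow k H n) (TensorProduct.comm k H H).toLinearMap ∘ₗ
    (TensorProduct.assoc k H H (Vpow k H n)).symm.toLinearMap

/-- rotation moving the last tensor factor to the front (no sign) -/
def rho : ∀ n, Vpow k H n →ₗ[k] Vpow k H n
  | 0 => LinearMap.id
  | 1 => LinearMap.id
  | n + 2 => swapV k H n ∘ₗ lTensor H (rho (n + 1))

/-- the cyclic operator `λ(c₀ ⊗ ⋯ ⊗ cₙ) = (-1)^n cₙ ⊗ c₀ ⊗ ⋯ ⊗ c_{n-1}` in degree `n` -/
def cycOp (n : ℕ) : Vpow k H (n + 1) →ₗ[k] Vpow k H (n + 1) :=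
  ((-1 : k) ^ n) • rho k H (n + 1)

/-- the cyclic operator `t = β ∘ λ ∘ α` on `E_n(H) = H^{⊗ (n+1)}` -/
def tdeg (n : ℕ) : Vpow k H (n + 1) →ₗ[k] Vpow k H (n + 1) :=
  betaMap k H (n + 1) ∘ₗ cycOp k H n ∘ₗ alphaMap k H (n + 1)

/-- the `i`-th face (counit on the `i`-th factor) of the coalgebra cyclic module -/
def face : ∀ (n : ℕ), ℕ → (Vpow k H (n + 1) →ₗ[k] Vpow k H n)
  | n, 0 => (TensorProduct.lid k (Vpow k H n)).toLinearMap ∘ₗ rTensor (Vpow k H n) (ct k H)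
  | 0, _ + 1 => (TensorProduct.lid k (Vpow k H 0)).toLinearMap ∘ₗ rTensor (Vpow k H 0) (ct k H)
  | n + 1, i + 1 => lTensor H (face n i)

/-- insert `1` in front -/
def insV (n : ℕ) : Vpow k H n →ₗ[k] Vpow k H (n + 1) :=
  rTensor (Vpow k H n) (un k H) ∘ₗ (TensorProduct.lid k (Vpow k H n)).symm.toLinearMap

/-- the degeneracy `s_j` inserting a `1` after the `j`-th factor -/
def degV : ∀ (n : ℕ), ℕ → (Vpow k H (n + 1) →ₗ[k] Vpow k H (n + 2))
  | n, 0 => lTensor H (insV k H n)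
  | 0, _ + 1 => lTensor H (insV k H 0)
  | n + 1, j + 1 => lTensor H (degV n j)

/-- counit on the last tensor factor -/
def dLast : ∀ n, Vpow k H (n + 1) →ₗ[k] Vpow k H n
  | 0 => ct k H ∘ₗ (TensorProduct.rid k H).toLinearMap
  | n + 1 => lTensor H (dLast n)

abbrev comul2 : H →ₗ[k] H ⊗[k] (H ⊗[k] H) := lTensor H (cm k H) ∘ₗ cm k H

/-- `G(h₁ ⊗ ⋯ ⊗ hₙ) = (∏ hᵢ⁽⁰⁾) ⊗ (∏ hᵢ⁽¹⁾) ⊗ (h₁⁽²⁾ ⊗ ⋯ ⊗ hₙ⁽²⁾)` -/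
def Gmap : ∀ n, Vpow k H n →ₗ[k] H ⊗[k] (H ⊗[k] Vpow k H n)
  | 0 =>
    TensorProduct.map (un k H) (TensorProduct.map (un k H) LinearMap.id) ∘ₗ
      lTensor k (TensorProduct.lid k k).symm.toLinearMap ∘ₗ
      (TensorProduct.lid k k).symm.toLinearMap
  | n + 1 =>
    TensorProduct.map (mu k H) (TensorProduct.map (mu k H) LinearMap.id) ∘ₗ
      lTensor (H ⊗[k] H)
        (tensorTensorTensorComm k H H H (Vpow k H n)).toLinearMap ∘ₗ
      (tensorTensorTensorComm k H (H ⊗[k] H) H (H ⊗[k] Vpow k H n)).toLinearMap ∘ₗ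
      TensorProduct.map (comul2 k H) (Gmap n)

/-- `U(h₁ ⊗ ⋯ ⊗ hₙ) = (∏ hᵢ⁽⁰⁾) ⊗ (h₁⁽¹⁾ ⊗ ⋯ ⊗ hₙ⁽¹⁾)` -/
def Umap : ∀ n, Vpow k H n →ₗ[k] H ⊗[k] Vpow k H n
  | 0 => (rTensor k (un k H) : k ⊗[k] k →ₗ[k] H ⊗[k] k) ∘ₗ (TensorProduct.lid k k).symm.toLinearMap
  | n + 1 =>
    TensorProduct.map (mu k H) LinearMap.id ∘ₗ
      (tensorTensorTensorComm k H H H (Vpow k H n)).toLinearMap ∘ₗ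
      rTensor (H ⊗[k] Vpow k H n) (cm k H) ∘ₗ
      lTensor H (Umap n)

/-- the map `τ(h₁ ⊗ ⋯ ⊗ hₙ) = S(h₁⁽⁰⁾⋯hₙ⁽⁰⁾) ⊗ h₁⁽¹⁾ ⊗ ⋯ ⊗ hₙ⁽¹⁾` -/
def tauMap (n : ℕ) : Vpow k H n →ₗ[k] Vpow k H (n + 1) :=
  rTensor (Vpow k H n) (ap k H) ∘ₗ Umap k H n

/-- the pure tensor `x 0 ⊗ x 1 ⊗ ⋯` -/
def elemV : ∀ n, (Fin n → H) → Vpow k H n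
  | 0, _ => (1 : k)
  | n + 1, x => x 0 ⊗ₜ[k] elemV n fun i => x i.succ

/-- cocommutativity of the comultiplication -/
def IsCocomm : Prop :=
  (TensorProduct.comm k H H).toLinearMap ∘ₗ cm k H = cm k H

/-!
Let `H ⊗ H` act on `H ⊗ H^{⊗ n}` by `(r ⊗ s) • (p ⊗ w) = r p ⊗ s • w`, with `s • w` the diagonal
action. The diagonal action in degree `n + 1` is `a • z = Δa • z`, and `α(h ⊗ y) = Δh • (1 ⊗ α y)`.
The diagonal action is associative (induction on `n`, using that `Δ` and `ε` are multiplicative),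
hence so is the `H ⊗ H`-action, and therefore
`α(a h ⊗ y) = (Δa Δh) • (1 ⊗ α y) = Δa • (Δh • (1 ⊗ α y)) = a • α(h ⊗ y)`.
-/

def pairAct (n : ℕ) : (H ⊗[k] H) ⊗[k] (H ⊗[k] Vpow k H n) →ₗ[k] H ⊗[k] Vpow k H n :=
  TensorProduct.map (mu k H) (diagAct k H n) ∘ₗ
    (tensorTensorTensorComm k H H H (Vpow k H n)).toLinearMap

variable {k H}

lemma pairAct_tmul (n : ℕ) (r s p : H) (w : Vpow k H n) :
    pairAct k H n ((r ⊗ₜ s) ⊗ₜ (p ⊗ₜ w)) = (r * p) ⊗ₜ diagAct k H n (s ⊗ₜ w) := by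
  simp [pairAct]

lemma diagAct_succ_tmul (n : ℕ) (a : H) (z : H ⊗[k] Vpow k H n) :
    diagAct k H (n + 1) (a ⊗ₜ z) = pairAct k H n (cm k H a ⊗ₜ z) :=
  rfl

lemma diagAct_zero_tmul (a : H) (c : Vpow k H 0) :
    diagAct k H 0 (a ⊗ₜ c) = ct k H a • c := by
  change ct k H ((show k from c) • a) = ct k H a * (show k from c)
  rw [map_smul, smul_eq_mul, mul_comm]

lemma pairAct_mul {n : ℕ}
    (hmul : ∀ (a b : H) (w : Vpow k H n),
      diagAct k H n (a ⊗ₜ diagAct k H n (b ⊗ₜ w)) = diagAct k H n ((a * b) ⊗ₜ w))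
    (u v : H ⊗[k] H) (z : H ⊗[k] Vpow k H n) :
    pairAct k H n (u ⊗ₜ pairAct k H n (v ⊗ₜ z)) = pairAct k H n ((u * v) ⊗ₜ z) := by
  induction u using TensorProduct.induction_on with
  | zero => simp
  | add u₁ u₂ h₁ h₂ => simp [add_mul, add_tmul, h₁, h₂]
  | tmul r s =>
    induction v using TensorProduct.induction_on with
    | zero => simp
    | add v₁ v₂ h₁ h₂ => simp [mul_add, add_tmul, tmul_add, h₁, h₂]
    | tmul r' s' =>
      induction z using TensorProduct.induction_on with
      | zero => simp
      | add z₁ z₂ h₁ h₂ => simp [tmul_add, h₁, h₂]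
      | tmul p w => simp [pairAct_tmul, hmul, mul_assoc]

lemma diagAct_mul (n : ℕ) (a b : H) (w : Vpow k H n) :
    diagAct k H n (a ⊗ₜ diagAct k H n (b ⊗ₜ w)) = diagAct k H n ((a * b) ⊗ₜ w) := by
  induction n generalizing a b with
  | zero => rw [diagAct_zero_tmul, diagAct_zero_tmul, diagAct_zero_tmul, smul_smul,
      Bialgebra.counit_mul]
  | succ n ih =>
    have key := pairAct_mul ih (cm k H a) (cm k H b) w
    rw [← Bialgebra.comul_mul] at key
    exact key

lemma alphaMap_succ_tmul (n : ℕ) (h : H) (y : Vpow k H n) :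
    alphaMap k H (n + 1) (h ⊗ₜ y) = pairAct k H n (cm k H h ⊗ₜ (1 ⊗ₜ alphaMap k H n y)) := by
  change lTensor H (diagAct k H n) (TensorProduct.assoc k H H _ (cm k H h ⊗ₜ alphaMap k H n y)) = _
  induction cm k H h using TensorProduct.induction_on with
  | zero => simp
  | add u₁ u₂ h₁ h₂ => simp [add_tmul, h₁, h₂]
  | tmul p q => simp [pairAct_tmul]

lemma actF_succ_tmul (n : ℕ) (a h : H) (y : Vpow k H n) :
    actF k H (n + 1) (a ⊗ₜ (h ⊗ₜ y)) = (a * h) ⊗ₜ y :=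
  rfl

theorem alphaMap_equivariant_general
    (n : ℕ) (a : H) (x : Vpow k H (n + 1)) :
    alphaMap k H (n + 1) (actF k H (n + 1) (a ⊗ₜ[k] x)) =
      diagAct k H (n + 1) (a ⊗ₜ[k] alphaMap k H (n + 1) x) := by
  suffices alphaMap k H (n + 1) ∘ₗ actF k H (n + 1) ∘ₗ TensorProduct.mk k H _ a =
      diagAct k H (n + 1) ∘ₗ TensorProduct.mk k H _ a ∘ₗ alphaMap k H (n + 1) from
    LinearMap.congr_fun this x
  refine TensorProduct.ext' fun h y => ?_
  change alphaMap k H (n + 1) (actF k H (n + 1) (a ⊗ₜ[k] (h ⊗ₜ[k] y))) =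
    diagAct k H (n + 1) (a ⊗ₜ[k] alphaMap k H (n + 1) (h ⊗ₜ[k] y))
  rw [actF_succ_tmul, alphaMap_succ_tmul, alphaMap_succ_tmul, diagAct_succ_tmul,
    pairAct_mul (diagAct_mul n), Bialgebra.comul_mul]

/-- For a cocommutative Hopf algebra `H`, the map `α` intertwines the
`E`-module structure (multiplication on the first factor) with the diagonal `H`-module
structure on `R_n(H) = H^{⊗(n+1)}`: `α(a ·_E x) = a ·_R α(x)`. -/
theorem alphaMap_equivariant (hcc : IsCocomm k H)
    (n : ℕ) (a : H) (x : Vpow k H (n + 1)) :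
    alphaMap k H (n + 1) (actF k H (n + 1) (a ⊗ₜ[k] x)) =
      diagAct k H (n + 1) (a ⊗ₜ[k] alphaMap k H (n + 1) x) :=
  alphaMap_equivariant_general n a x
end
end
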